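/- The matching polytope P_M(n) is contained in Q_ε(n), and Q_ε(n) is contained in (1+ε)·P_M(n), for all 0 < ε ≤ 1. In particular, for any vector x satisfying all degree constraints, nonnegativity, and odd-set constraints for odd sets U with |U| ≤ (1+ε)/ε, and any odd set U with |U| > (1+ε)/ε, one has Σ_{e ⊆ U} x_e ≤ (1+ε)(|U|-1)/2. -/

import Mathlib

/-- The set of edges of the complete graph `K_n` (2-element vertex subsets) incident
on the vertex `v`. -/
def edgesIncident (n : ℕ) (v : Fin n) : Finset (Finset (Fin n)) :=
  Finset.univ.filter (fun e => e.card = 2 ∧ v ∈ e)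

/-- The set of edges of `K_n` with both endpoints inside `U`. -/
def edgesInside (n : ℕ) (U : Finset (Fin n)) : Finset (Finset (Fin n)) :=
  Finset.univ.filter (fun e => e.card = 2 ∧ e ⊆ U)

/-- Membership in the matching polytope `P_M(n)`, via Edmonds' description:
nonnegativity, degree constraints, and odd-set constraints for all odd sets. -/
def memPM (n : ℕ) (x : Finset (Fin n) → ℝ) : Prop :=
  (∀ e, 0 ≤ x e) ∧
  (∀ v : Fin n, ∑ e ∈ edgesIncident n v, x e ≤ 1) ∧
  (∀ U : Finset (Fin n), Odd U.card →
      ∑ e ∈ edgesInside n U, x e ≤ ((U.card : ℝ) - 1) / 2)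

/-- Membership in the relaxation `Q_ε(n)`: nonnegativity, degree constraints, and
odd-set constraints only for odd sets `U` with `|U| ≤ (1+ε)/ε`. -/
def memQ (n : ℕ) (ε : ℝ) (x : Finset (Fin n) → ℝ) : Prop :=
  (∀ e, 0 ≤ x e) ∧
  (∀ v : Fin n, ∑ e ∈ edgesIncident n v, x e ≤ 1) ∧
  (∀ U : Finset (Fin n), Odd U.card → (U.card : ℝ) ≤ (1 + ε) / ε →
      ∑ e ∈ edgesInside n U, x e ≤ ((U.card : ℝ) - 1) / 2)

/-!
Nonnegativity and the degree constraints are untouched by scaling down, and the odd-set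
constraints of `Q_ε` survive scaling by `1 + ε`. For an odd set `U` with `|U| > (1+ε)/ε`,
counting every edge inside `U` from both of its endpoints, the degree constraints give
`x(E(U)) ≤ |U|/2`, and `|U|/2 ≤ (1+ε)(|U|-1)/2` holds exactly when `ε|U| ≥ 1 + ε`.
-/

open Finset

theorem two_mul_sum_edgesInside_le {n : ℕ} {x : Finset (Fin n) → ℝ} (hx : ∀ e, 0 ≤ x e)
    (U : Finset (Fin n)) :
    2 * ∑ e ∈ edgesInside n U, x e ≤ ∑ v ∈ U, ∑ e ∈ edgesIncident n v, x e := by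
  have h_comm : ∑ e ∈ edgesInside n U, ∑ _v ∈ e, x e
      = ∑ v ∈ U, ∑ e ∈ (edgesInside n U).filter (v ∈ ·), x e := by
    refine sum_comm' fun e v => ?_
    simp only [edgesInside, mem_filter, mem_univ, true_and]
    exact ⟨fun ⟨⟨hcard, hsub⟩, hv⟩ => ⟨⟨⟨hcard, hsub⟩, hv⟩, hsub hv⟩,
      fun ⟨⟨⟨hcard, hsub⟩, hv⟩, _⟩ => ⟨⟨hcard, hsub⟩, hv⟩⟩
  calc 2 * ∑ e ∈ edgesInside n U, x e
      = ∑ e ∈ edgesInside n U, ∑ _v ∈ e, x e := by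
        rw [mul_sum]
        refine sum_congr rfl fun e he => ?_
        rw [sum_const, (mem_filter.mp he).2.1, nsmul_eq_mul, Nat.cast_ofNat]
    _ = ∑ v ∈ U, ∑ e ∈ (edgesInside n U).filter (v ∈ ·), x e := h_comm
    _ ≤ ∑ v ∈ U, ∑ e ∈ edgesIncident n v, x e := by
        refine sum_le_sum fun v _ => sum_le_sum_of_subset_of_nonneg ?_ fun e _ _ => hx e
        intro e he
        simp only [edgesInside, edgesIncident, mem_filter, mem_univ, true_and] at he ⊢
        exact ⟨he.1.1, he.2⟩

theorem sum_edgesInside_le_card_div_two {n : ℕ} {x : Finset (Fin n) → ℝ}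
    (hx : ∀ e, 0 ≤ x e) (hdeg : ∀ v, ∑ e ∈ edgesIncident n v, x e ≤ 1) (U : Finset (Fin n)) :
    ∑ e ∈ edgesInside n U, x e ≤ U.card / 2 := by
  have h_deg_sum : ∑ v ∈ U, ∑ e ∈ edgesIncident n v, x e ≤ U.card := by
    simpa using sum_le_sum fun v (_ : v ∈ U) => hdeg v
  linarith [two_mul_sum_edgesInside_le hx U]

theorem memQ_of_memPM {n : ℕ} (ε : ℝ) {x : Finset (Fin n) → ℝ} (hx : memPM n x) :
    memQ n ε x :=
  ⟨hx.1, hx.2.1, fun U hU _ => hx.2.2 U hU⟩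

theorem sum_edgesInside_le_of_memQ {n : ℕ} {ε : ℝ} (hε : 0 < ε) {x : Finset (Fin n) → ℝ}
    (hx : memQ n ε x) {U : Finset (Fin n)} (hU : Odd U.card) :
    ∑ e ∈ edgesInside n U, x e ≤ (1 + ε) * (((U.card : ℝ) - 1) / 2) := by
  obtain ⟨hnn, hdeg, hodd⟩ := hx
  by_cases hsmall : (U.card : ℝ) ≤ (1 + ε) / ε
  · have hcard : (1 : ℝ) ≤ U.card := by exact_mod_cast hU.pos
    exact (hodd U hU hsmall).trans (le_mul_of_one_le_left (by linarith) (by linarith))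
  · have hlarge : 1 + ε < ε * U.card := by
      rw [not_le, div_lt_iff₀ hε] at hsmall
      linarith
    linarith [sum_edgesInside_le_card_div_two hnn hdeg U]

theorem memPM_div_of_memQ {n : ℕ} {ε : ℝ} (hε : 0 < ε) {x : Finset (Fin n) → ℝ}
    (hx : memQ n ε x) : memPM n (fun e => x e / (1 + ε)) := by
  have h1ε : 0 < 1 + ε := by linarith
  refine ⟨fun e => div_nonneg (hx.1 e) h1ε.le, fun v => ?_, fun U hU => ?_⟩
  · rw [← sum_div, div_le_one h1ε]
    linarith [hx.2.1 v]
  · rw [← sum_div, div_le_iff₀' h1ε]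
    exact sum_edgesInside_le_of_memQ hε hx hU

/-- `Q_ε(n) ⊆ (1+ε)·P_M(n)` is expressed by saying that `x/(1+ε)` satisfies all of Edmonds'
constraints. -/
theorem stmt12_general (n : ℕ) (ε : ℝ) (hε : 0 < ε) :
    (∀ x : Finset (Fin n) → ℝ, memPM n x → memQ n ε x) ∧
    (∀ x : Finset (Fin n) → ℝ, memQ n ε x → memPM n (fun e => x e / (1 + ε))) :=
  ⟨fun _ => memQ_of_memPM ε, fun _ => memPM_div_of_memQ hε⟩

/-- `P_M(n) ⊆ Q_ε(n) ⊆ (1+ε)·P_M(n)`: the second inclusion is expressed by saying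
that `x/(1+ε)` satisfies all of Edmonds' constraints. -/
theorem stmt12 (n : ℕ) (ε : ℝ) (hε : 0 < ε) (hε1 : ε ≤ 1) :
    (∀ x : Finset (Fin n) → ℝ, memPM n x → memQ n ε x) ∧
    (∀ x : Finset (Fin n) → ℝ, memQ n ε x → memPM n (fun e => x e / (1 + ε))) :=
  stmt12_general n ε hε
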